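/- Concentration of uniform order statistics: Let U₁, …, Uₙ be i.i.d. uniform random variables on [0,1] and let U_(1) ≤ ⋯ ≤ U_(n) denote their order statistics. Then for all n > 2, the probability that there exists some k ∈ {1,…,n} with |U_(k) − k/n| > (log n)/√n is at most 2n·exp(−(2/3)(log n)²). -/

import Mathlib

open MeasureTheory ProbabilityTheory Set

/-!
If `U_(k) > (k+1)/n + δ`, then at least `n - k` of the `U_i` exceed `x = (k+1)/n + δ`; this count
is a sum of `n` independent indicators with mean `n (1 - x) = n - k - 1 - n δ`, so Hoeffding's
inequality bounds the probability by `exp (-2 n δ²)`. The lower deviation is symmetric (count the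
`U_i` below `(k+1)/n - δ`), and a union bound over `k` and both sides gives `2 n exp (-2 n δ²)`.
For `δ = log n / √n` this is `2 n exp (-2 (log n)²) ≤ 2 n exp (-(2/3) (log n)²)`.
-/

section OrderStatistic

variable {α : Type*} [LinearOrder α] {n : ℕ} (f : Fin n → α) (k : Fin n)

theorem sub_le_card_lt_of_lt_sort {x : α} (h : x < f (Tuple.sort f k)) :
    n - k ≤ (Finset.univ.filter fun i => x < f i).card :=
  calc n - k = ((Finset.Ici k).image (Tuple.sort f)).card := by
        rw [Finset.card_image_of_injective _ (Tuple.sort f).injective, Fin.card_Ici]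
    _ ≤ _ := Finset.card_le_card fun i hi => by
        obtain ⟨j, hj, rfl⟩ := Finset.mem_image.mp hi
        exact Finset.mem_filter.mpr
          ⟨Finset.mem_univ _, h.trans_le (Tuple.monotone_sort f (Finset.mem_Ici.mp hj))⟩

theorem succ_le_card_lt_of_sort_lt {y : α} (h : f (Tuple.sort f k) < y) :
    k + 1 ≤ (Finset.univ.filter fun i => f i < y).card :=
  calc k + 1 = ((Finset.Iic k).image (Tuple.sort f)).card := by
        rw [Finset.card_image_of_injective _ (Tuple.sort f).injective, Fin.card_Iic]
    _ ≤ _ := Finset.card_le_card fun i hi => by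
        obtain ⟨j, hj, rfl⟩ := Finset.mem_image.mp hi
        exact Finset.mem_filter.mpr
          ⟨Finset.mem_univ _, (Tuple.monotone_sort f (Finset.mem_Iic.mp hj)).trans_lt h⟩

end OrderStatistic

open Classical in
theorem measure_card_mem_ge_le {Ω E ι : Type*} [MeasurableSpace Ω] [MeasurableSpace E] [Fintype ι]
    {P : Measure Ω} {U : ι → Ω → E} (hU : ∀ i, AEMeasurable (U i) P) (hindep : iIndepFun U P)
    {S : Set E} (hS : MeasurableSet S) {p : ℝ} (hp : ∀ i, (P.map (U i)).real S = p)
    {s : ℝ} (hs : 0 ≤ s) :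
    P {ω | Fintype.card ι * p + s ≤ (Finset.univ.filter fun i => U i ω ∈ S).card}
      ≤ ENNReal.ofReal (Real.exp (-2 * s ^ 2 / Fintype.card ι)) := by
  have := hindep.isProbabilityMeasure
  have hind : Measurable (S.indicator (1 : E → ℝ)) := measurable_one.indicator hS
  have hmean (i : ι) : ∫ ω, S.indicator 1 (U i ω) ∂P = p := by
    rw [← hp i, ← integral_indicator_one hS, integral_map (hU i) hind.aestronglyMeasurable]
  have hsubG (i : ι) : HasSubgaussianMGF (fun ω => S.indicator 1 (U i ω) - p)
      ((‖(1 : ℝ) - 0‖₊ / 2) ^ 2) P := by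
    have := hasSubgaussianMGF_of_mem_Icc (hind.comp_aemeasurable (hU i))
      (ae_of_all _ fun ω => ⟨indicator_nonneg (fun _ _ => zero_le_one) (U i ω),
        indicator_le_self' (fun _ _ => zero_le_one) (U i ω)⟩)
    simpa only [Function.comp_apply, hmean] using this
  have hhoeff := HasSubgaussianMGF.measure_sum_ge_le_of_iIndepFun
    (hindep.comp (fun _ x => S.indicator 1 x - p) fun _ => hind.sub_const p)
    (s := Finset.univ) (fun i _ => hsubG i) hs
  have hsum (ω : Ω) : ∑ i, (S.indicator 1 (U i ω) - p) =
      (Finset.univ.filter fun i => U i ω ∈ S).card - Fintype.card ι * p := by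
    simp [Finset.sum_sub_distrib, Set.indicator_apply, Finset.sum_boole]
  calc P {ω | Fintype.card ι * p + s ≤ (Finset.univ.filter fun i => U i ω ∈ S).card}
      ≤ P {ω | s ≤ ∑ i, (S.indicator 1 (U i ω) - p)} :=
        measure_mono fun ω h => by
          rw [mem_ofPred_eq] at h ⊢
          linarith [hsum ω]
    _ = ENNReal.ofReal (P.real {ω | s ≤ ∑ i, (S.indicator 1 (U i ω) - p)}) :=
        (ofReal_measureReal (measure_ne_top _ _)).symm
    _ ≤ ENNReal.ofReal (Real.exp (-2 * s ^ 2 / Fintype.card ι)) := by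
        refine ENNReal.ofReal_le_ofReal (hhoeff.trans_eq ?_)
        congr 1
        simp only [sub_zero, nnnorm_one, one_div, inv_pow, Finset.sum_const, Finset.card_univ,
          nsmul_eq_mul, NNReal.coe_mul, NNReal.coe_natCast, NNReal.coe_inv, NNReal.coe_pow,
          NNReal.coe_ofNat, neg_mul]
        ring

theorem restrict_Icc_zero_one_real_Ioi {x : ℝ} (h0 : 0 ≤ x) (h1 : x ≤ 1) :
    (volume.restrict (Icc (0 : ℝ) 1)).real (Ioi x) = 1 - x := by
  have : Ioi x ∩ Icc 0 1 = Ioc x 1 := by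
    ext a; simp only [mem_inter_iff, mem_Ioi, mem_Icc, mem_Ioc]; grind
  rw [measureReal_restrict_apply measurableSet_Ioi, this, Real.volume_real_Ioc_of_le h1]

theorem restrict_Icc_zero_one_real_Iio {y : ℝ} (h0 : 0 ≤ y) (h1 : y ≤ 1) :
    (volume.restrict (Icc (0 : ℝ) 1)).real (Iio y) = y := by
  have : Iio y ∩ Icc 0 1 = Ico 0 y := by
    ext a; simp only [mem_inter_iff, mem_Iio, mem_Icc, mem_Ico]; grind
  rw [measureReal_restrict_apply measurableSet_Iio, this, Real.volume_real_Ico_of_le h0, sub_zero]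

section UniformOrderStatistics

variable {Ω : Type*} [MeasurableSpace Ω] {P : Measure Ω} {n : ℕ} {U : Fin n → Ω → ℝ}

theorem aemeasurable_of_map_eq_restrict_Icc {X : Ω → ℝ}
    (hX : P.map X = volume.restrict (Icc (0 : ℝ) 1)) : AEMeasurable X P :=
  AEMeasurable.of_map_ne_zero (by simp [hX])

theorem ae_forall_mem_Icc_of_map_eq_restrict_Icc
    (hunif : ∀ i, P.map (U i) = volume.restrict (Icc (0 : ℝ) 1)) :
    ∀ᵐ ω ∂P, ∀ i, U i ω ∈ Icc (0 : ℝ) 1 :=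
  ae_all_iff.2 fun i => (ae_map_iff (aemeasurable_of_map_eq_restrict_Icc (hunif i))
    measurableSet_Icc).1 (by rw [hunif i]; exact ae_restrict_mem measurableSet_Icc)

theorem measure_add_lt_orderStatistic_le
    (hunif : ∀ i, P.map (U i) = volume.restrict (Icc (0 : ℝ) 1)) (hindep : iIndepFun U P)
    (k : Fin n) {δ : ℝ} (hδ : 0 ≤ δ) :
    P {ω | ((k : ℕ) + 1) / n + δ < U (Tuple.sort (fun i => U i ω) k) ω}
      ≤ ENNReal.ofReal (Real.exp (-2 * n * δ ^ 2)) := by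
  set x : ℝ := ((k : ℕ) + 1) / n + δ
  have hn : (0 : ℝ) < n := Nat.cast_pos.2 k.pos
  rcases le_or_gt x 1 with hx1 | hx1
  · have hx0 : 0 ≤ x := by positivity
    have hmean : n * (1 - x) + n * δ = n - ((k : ℕ) + 1) := by
      simp only [x]; field_simp; ring
    calc P {ω | x < U (Tuple.sort (fun i => U i ω) k) ω}
        ≤ P {ω | Fintype.card (Fin n) * (1 - x) + n * δ
            ≤ (Finset.univ.filter fun i => U i ω ∈ Ioi x).card} := measure_mono fun ω h => by
          have hcard : ((n - k : ℕ) : ℝ) ≤ (Finset.univ.filter fun i => U i ω ∈ Ioi x).card := by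
            exact_mod_cast (sub_le_card_lt_of_lt_sort (fun i => U i ω) k h).trans_eq
              (by congr 1)
          rw [Nat.cast_sub k.isLt.le] at hcard
          rw [mem_ofPred_eq, Fintype.card_fin]
          linarith
      _ ≤ ENNReal.ofReal (Real.exp (-2 * (n * δ) ^ 2 / Fintype.card (Fin n))) :=
          measure_card_mem_ge_le (fun i => aemeasurable_of_map_eq_restrict_Icc (hunif i)) hindep
            measurableSet_Ioi (fun i => by rw [hunif i, restrict_Icc_zero_one_real_Ioi hx0 hx1])
            (by positivity)
      _ = ENNReal.ofReal (Real.exp (-2 * n * δ ^ 2)) := by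
          rw [Fintype.card_fin]; congr 2; field_simp
  · refine (measure_mono_null (fun ω h hmem => ?_)
      (ae_iff.1 (ae_forall_mem_Icc_of_map_eq_restrict_Icc hunif))).trans_le zero_le
    exact absurd (hmem _).2 (not_le.2 (hx1.trans h))

theorem measure_orderStatistic_lt_sub_le
    (hunif : ∀ i, P.map (U i) = volume.restrict (Icc (0 : ℝ) 1)) (hindep : iIndepFun U P)
    (k : Fin n) {δ : ℝ} (hδ : 0 ≤ δ) :
    P {ω | U (Tuple.sort (fun i => U i ω) k) ω < ((k : ℕ) + 1) / n - δ}
      ≤ ENNReal.ofReal (Real.exp (-2 * n * δ ^ 2)) := by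
  set y : ℝ := ((k : ℕ) + 1) / n - δ
  have hn : (0 : ℝ) < n := Nat.cast_pos.2 k.pos
  rcases le_or_gt 0 y with hy0 | hy0
  · have hy1 : y ≤ 1 := by
      have : ((k : ℕ) + 1 : ℝ) ≤ n := by exact_mod_cast k.isLt
      have : ((k : ℕ) + 1) / (n : ℝ) ≤ 1 := (div_le_one hn).2 this
      linarith
    have hmean : n * y + n * δ = (k : ℕ) + 1 := by
      simp only [y]; field_simp; ring
    calc P {ω | U (Tuple.sort (fun i => U i ω) k) ω < y}
        ≤ P {ω | Fintype.card (Fin n) * y + n * δ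
            ≤ (Finset.univ.filter fun i => U i ω ∈ Iio y).card} := measure_mono fun ω h => by
          have hcard : (((k : ℕ) + 1 : ℕ) : ℝ)
              ≤ (Finset.univ.filter fun i => U i ω ∈ Iio y).card := by
            exact_mod_cast (succ_le_card_lt_of_sort_lt (fun i => U i ω) k h).trans_eq
              (by congr 1)
          push_cast at hcard
          rw [mem_ofPred_eq, Fintype.card_fin]
          linarith
      _ ≤ ENNReal.ofReal (Real.exp (-2 * (n * δ) ^ 2 / Fintype.card (Fin n))) :=
          measure_card_mem_ge_le (fun i => aemeasurable_of_map_eq_restrict_Icc (hunif i)) hindep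
            measurableSet_Iio (fun i => by rw [hunif i, restrict_Icc_zero_one_real_Iio hy0 hy1])
            (by positivity)
      _ = ENNReal.ofReal (Real.exp (-2 * n * δ ^ 2)) := by
          rw [Fintype.card_fin]; congr 2; field_simp
  · refine (measure_mono_null (fun ω h hmem => ?_)
      (ae_iff.1 (ae_forall_mem_Icc_of_map_eq_restrict_Icc hunif))).trans_le zero_le
    exact absurd (hmem _).1 (not_le.2 (h.trans hy0))

theorem measure_exists_lt_abs_orderStatistic_sub_le
    (hunif : ∀ i, P.map (U i) = volume.restrict (Icc (0 : ℝ) 1)) (hindep : iIndepFun U P)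
    {δ : ℝ} (hδ : 0 ≤ δ) :
    P {ω | ∃ k : Fin n,
        δ < |((fun i => U i ω) ∘ Tuple.sort (fun i => U i ω)) k - ((k : ℕ) + 1) / n|}
      ≤ ENNReal.ofReal (2 * n * Real.exp (-2 * n * δ ^ 2)) := by
  set A : Fin n → Set Ω := fun k =>
    {ω | ((k : ℕ) + 1) / n + δ < U (Tuple.sort (fun i => U i ω) k) ω}
  set C : Fin n → Set Ω := fun k =>
    {ω | U (Tuple.sort (fun i => U i ω) k) ω < ((k : ℕ) + 1) / n - δ}
  calc P _ ≤ P (⋃ k, A k ∪ C k) := measure_mono fun ω hω => by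
        obtain ⟨k, hk⟩ := hω
        refine mem_iUnion.2 ⟨k, ?_⟩
        rw [Function.comp_apply] at hk
        rcases lt_abs.1 hk with h | h
        · exact Or.inl (by simp only [A, mem_ofPred_eq]; linarith)
        · exact Or.inr (by simp only [C, mem_ofPred_eq]; linarith)
    _ ≤ ∑ k, P (A k ∪ C k) := measure_iUnion_fintype_le _ _
    _ ≤ ∑ _k : Fin n, 2 * ENNReal.ofReal (Real.exp (-2 * n * δ ^ 2)) :=
        Finset.sum_le_sum fun k _ => (measure_union_le _ _).trans <| by
          rw [two_mul]
          exact add_le_add (measure_add_lt_orderStatistic_le hunif hindep k hδ)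
            (measure_orderStatistic_lt_sub_le hunif hindep k hδ)
    _ = ENNReal.ofReal (2 * n * Real.exp (-2 * n * δ ^ 2)) := by
        rw [Finset.sum_const, Finset.card_univ, Fintype.card_fin, nsmul_eq_mul,
          ENNReal.ofReal_mul (by positivity), ENNReal.ofReal_mul (by positivity),
          ENNReal.ofReal_ofNat, ENNReal.ofReal_natCast]
        ring

end UniformOrderStatistics

theorem natCast_mul_div_sqrt_sq (n : ℕ) :
    (n : ℝ) * (Real.log n / Real.sqrt n) ^ 2 = Real.log n ^ 2 := by
  rcases n.eq_zero_or_pos with rfl | hn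
  · simp
  · rw [div_pow, Real.sq_sqrt n.cast_nonneg]
    field_simp

theorem orderStatistic_concentration_general
    {Ω : Type*} [MeasurableSpace Ω] (P : Measure Ω)
    (n : ℕ) (U : Fin n → Ω → ℝ)
    (hindep : iIndepFun U P)
    (hunif : ∀ i, P.map (U i) = volume.restrict (Icc (0:ℝ) 1)) :
    P {ω | ∃ k : Fin n,
        Real.log n / Real.sqrt n <
          |((fun i => U i ω) ∘ Tuple.sort (fun i => U i ω)) k - ((k : ℕ) + 1) / n|}
      ≤ ENNReal.ofReal (2 * n * Real.exp (-(2/3) * (Real.log n)^2)) := by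
  have hδ : 0 ≤ Real.log n / Real.sqrt n :=
    div_nonneg (Real.log_natCast_nonneg n) (Real.sqrt_nonneg n)
  refine (measure_exists_lt_abs_orderStatistic_sub_le hunif hindep hδ).trans ?_
  gcongr ENNReal.ofReal (2 * n * Real.exp ?_)
  rw [mul_assoc, natCast_mul_div_sqrt_sq]
  nlinarith [sq_nonneg (Real.log n)]

/-- Concentration of uniform order statistics: if `U₁, …, Uₙ` are
i.i.d. Uniform[0,1] random variables with order statistics `U_(1) ≤ ⋯ ≤ U_(n)`, then
for `n > 2` the probability that some `k` satisfies `|U_(k) - k/n| > (log n)/√n` is at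
most `2 n exp(-(2/3)(log n)²)`.  Here the `k`-th order statistic (for `k : Fin n`,
representing index `k+1`) is obtained by composing with the sorting permutation
`Tuple.sort`. -/
theorem orderStatistic_concentration
    {Ω : Type*} [MeasurableSpace Ω] (P : Measure Ω) [IsProbabilityMeasure P]
    (n : ℕ) (hn : 2 < n) (U : Fin n → Ω → ℝ)
    (hmeas : ∀ i, Measurable (U i))
    (hindep : iIndepFun U P)
    (hunif : ∀ i, P.map (U i) = volume.restrict (Icc (0:ℝ) 1)) :
    P {ω | ∃ k : Fin n,
        Real.log n / Real.sqrt n <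
          |((fun i => U i ω) ∘ Tuple.sort (fun i => U i ω)) k - ((k : ℕ) + 1) / n|}
      ≤ ENNReal.ofReal (2 * n * Real.exp (-(2/3) * (Real.log n)^2)) :=
  orderStatistic_concentration_general P n U hindep hunif
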